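/- For all X, Y ∈ VPM°(n), the restricted affine-invariant Riemannian distance is bounded by the Hilbert VPM distance: (1/√n)·d_AIRM(X, Y) ≤ d_H(X, Y). -/

import Mathlib

open Matrix

/-- The open variance-precision bicone VPM°(n): symmetric matrices `X` with
`X` and `I - X` positive definite. -/
def VPM (n : ℕ) : Set (Matrix (Fin n) (Fin n) ℝ) :=
  {X | X.PosDef ∧ (1 - X).PosDef}

/-- Largest (real) eigenvalue of a matrix, as the supremum of its real spectrum. -/
noncomputable def lmax {n : ℕ} (S : Matrix (Fin n) (Fin n) ℝ) : ℝ := sSup (spectrum ℝ S)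

/-- Smallest (real) eigenvalue of a matrix, as the infimum of its real spectrum. -/
noncomputable def lmin {n : ℕ} (S : Matrix (Fin n) (Fin n) ℝ) : ℝ := sInf (spectrum ℝ S)

/-- Hilbert VPM distance. -/
noncomputable def dH {n : ℕ} (J₁ J₂ : Matrix (Fin n) (Fin n) ℝ) : ℝ :=
  Real.log (max (lmax (J₂⁻¹ * J₁)) (lmax ((1 - J₂)⁻¹ * (1 - J₁))) /
            min (lmin (J₂⁻¹ * J₁)) (lmin ((1 - J₂)⁻¹ * (1 - J₁))))

lemma isHermitian_conj {n : ℕ} {B P : Matrix (Fin n) (Fin n) ℝ}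
    (hB : B.IsHermitian) (hP : P.IsHermitian) : (B * P * B).IsHermitian := by
  have h := Matrix.isHermitian_mul_mul_conjTranspose B hP
  rwa [hB] at h

/-- The square root of a positive semidefinite matrix, as `Matrix.PosSemidef.sqrt` was
defined in the older Mathlib (removed since). -/
noncomputable def Matrix.PosSemidef.sqrt {n : ℕ} {A : Matrix (Fin n) (Fin n) ℝ}
    (hA : A.PosSemidef) : Matrix (Fin n) (Fin n) ℝ :=
  (hA.1.eigenvectorUnitary : Matrix (Fin n) (Fin n) ℝ) *
    diagonal ((↑) ∘ (√·) ∘ hA.1.eigenvalues) *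
    (star (hA.1.eigenvectorUnitary : Matrix (Fin n) (Fin n) ℝ))

lemma Matrix.PosSemidef.posSemidef_sqrt {n : ℕ} {A : Matrix (Fin n) (Fin n) ℝ}
    (hA : A.PosSemidef) : hA.sqrt.PosSemidef := by
  unfold Matrix.PosSemidef.sqrt
  rw [star_eq_conjTranspose]
  apply Matrix.PosSemidef.mul_mul_conjTranspose_same
  apply Matrix.PosSemidef.diagonal
  intro i
  simp [Real.sqrt_nonneg]

lemma Matrix.PosSemidef.sqrt_mul_self {n : ℕ} {A : Matrix (Fin n) (Fin n) ℝ}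
    (hA : A.PosSemidef) : hA.sqrt * hA.sqrt = A := by
  have h2 := Matrix.mem_unitaryGroup_iff'.mp (hA.1.eigenvectorUnitary).2
  have hs : A = (hA.1.eigenvectorUnitary : Matrix (Fin n) (Fin n) ℝ) *
      diagonal (RCLike.ofReal ∘ hA.1.eigenvalues) *
      star (hA.1.eigenvectorUnitary : Matrix (Fin n) (Fin n) ℝ) := hA.1.spectral_theorem
  unfold Matrix.PosSemidef.sqrt
  conv_rhs => rw [hs]
  rw [show ∀ a b c d e f : Matrix (Fin n) (Fin n) ℝ,
      a * b * c * (d * e * f) = a * (b * (c * d) * e) * f by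
        intros; simp only [Matrix.mul_assoc]]
  rw [h2, Matrix.mul_one, diagonal_mul_diagonal]
  congr 2
  congr 1
  funext i
  simp [Real.mul_self_sqrt (hA.eigenvalues_nonneg i)]

/-- Affine-invariant Riemannian distance on PD(n):
`d_AIRM(P,Q) = sqrt(Σ_i log² λ_i(Q^{−1/2} P Q^{−1/2}))`, the eigenvalues taken
with multiplicity. -/
noncomputable def dAIRM {n : ℕ} {P Q : Matrix (Fin n) (Fin n) ℝ}
    (hP : P.PosDef) (hQ : Q.PosDef) : ℝ :=
  Real.sqrt (∑ i, Real.log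
    ((isHermitian_conj hQ.posSemidef.posSemidef_sqrt.isHermitian.inv
        hP.isHermitian).eigenvalues i) ^ 2)

section Helpers

variable {n : ℕ}

lemma myPosDef_conj {A B : Matrix (Fin n) (Fin n) ℝ} (hA : A.PosDef) (hB : IsUnit B) :
    (B * A * Bᴴ).PosDef := by
  refine Matrix.PosDef.of_dotProduct_mulVec_pos
    (Matrix.isHermitian_mul_mul_conjTranspose B hA.1) fun x hx => ?_
  have h : Bᴴ *ᵥ x ≠ 0 := by
    intro h0
    apply hx
    have hBH : IsUnit Bᴴ := by
      rw [Matrix.isUnit_iff_isUnit_det, Matrix.det_conjTranspose]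
      simpa using (Matrix.isUnit_iff_isUnit_det B).mp hB
    have := Matrix.mulVec_injective_iff_isUnit.mpr hBH
    have := this (a₁ := x) (a₂ := 0) (by simpa using h0)
    exact this
  simpa only [star_mulVec, dotProduct_mulVec, vecMul_vecMul, conjTranspose_conjTranspose]
    using hA.dotProduct_mulVec_pos h

lemma myUnit {A : Matrix (Fin n) (Fin n) ℝ} (hA : A.IsHermitian) :
    IsUnit (hA.eigenvectorUnitary : Matrix (Fin n) (Fin n) ℝ) :=
  ⟨⟨_, star (hA.eigenvectorUnitary : Matrix (Fin n) (Fin n) ℝ),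
    Matrix.mem_unitaryGroup_iff.mp (hA.eigenvectorUnitary).2,
    Matrix.mem_unitaryGroup_iff'.mp (hA.eigenvectorUnitary).2⟩, rfl⟩

lemma mySpectrumRange {A : Matrix (Fin n) (Fin n) ℝ} (hA : A.IsHermitian) :
    spectrum ℝ A = Set.range hA.eigenvalues := by
  let U : Matrix (Fin n) (Fin n) ℝ := hA.eigenvectorUnitary
  have h1 : U * star U = 1 := Matrix.mem_unitaryGroup_iff.mp (hA.eigenvectorUnitary).2
  have h2 : star U * U = 1 := Matrix.mem_unitaryGroup_iff'.mp (hA.eigenvectorUnitary).2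
  let u : (Matrix (Fin n) (Fin n) ℝ)ˣ := ⟨U, star U, h1, h2⟩
  conv_lhs => rw [hA.spectral_theorem]
  have h3 : spectrum ℝ ((u : Matrix (Fin n) (Fin n) ℝ)
        * (Matrix.diagonal (RCLike.ofReal ∘ hA.eigenvalues))
        * ((u⁻¹ : (Matrix (Fin n) (Fin n) ℝ)ˣ) : Matrix (Fin n) (Fin n) ℝ))
      = spectrum ℝ (Matrix.diagonal (RCLike.ofReal ∘ hA.eigenvalues)) :=
    spectrum.units_conjugate
  rw [show ((u : Matrix (Fin n) (Fin n) ℝ)) = U from rfl] at h3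
  rw [show ((u⁻¹ : (Matrix (Fin n) (Fin n) ℝ)ˣ) : Matrix (Fin n) (Fin n) ℝ) = star U from rfl] at h3
  refine (congrArg (spectrum ℝ) (show _ = U * diagonal (RCLike.ofReal ∘ hA.eigenvalues) * star U
    from rfl)).trans ?_
  rw [h3, spectrum_diagonal]
  ext z
  simp [RCLike.ofReal]

lemma mySubOne {A : Matrix (Fin n) (Fin n) ℝ} (hA : A.IsHermitian)
    (h : ∀ i, 1 < hA.eigenvalues i) : (A - 1).PosDef := by
  let U : Matrix (Fin n) (Fin n) ℝ := hA.eigenvectorUnitary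
  have h1 : U * star U = 1 := Matrix.mem_unitaryGroup_iff.mp (hA.eigenvectorUnitary).2
  have key : A - 1 = U * (Matrix.diagonal (fun i => hA.eigenvalues i - 1)) * Uᴴ := by
    have hd : Matrix.diagonal (fun i => hA.eigenvalues i - 1)
        = Matrix.diagonal (RCLike.ofReal ∘ hA.eigenvalues) - 1 := by
      rw [← Matrix.diagonal_one, ← Matrix.diagonal_sub]
      congr 1
    have hs : A = U * diagonal (RCLike.ofReal ∘ hA.eigenvalues) * star U := hA.spectral_theorem
    rw [hd, Matrix.mul_sub, Matrix.sub_mul, mul_one, ← Matrix.star_eq_conjTranspose,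
      ← hs, h1]
  rw [key]
  exact myPosDef_conj (Matrix.posDef_diagonal_iff.mpr (fun i => by linarith [h i])) (myUnit hA)

lemma myOneSub {A : Matrix (Fin n) (Fin n) ℝ} (hA : A.IsHermitian)
    (h : ∀ i, hA.eigenvalues i < 1) : (1 - A).PosDef := by
  let U : Matrix (Fin n) (Fin n) ℝ := hA.eigenvectorUnitary
  have h1 : U * star U = 1 := Matrix.mem_unitaryGroup_iff.mp (hA.eigenvectorUnitary).2
  have key : 1 - A = U * (Matrix.diagonal (fun i => 1 - hA.eigenvalues i)) * Uᴴ := by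
    have hd : Matrix.diagonal (fun i => 1 - hA.eigenvalues i)
        = 1 - Matrix.diagonal (RCLike.ofReal ∘ hA.eigenvalues) := by
      rw [← Matrix.diagonal_one, ← Matrix.diagonal_sub]
      congr 1
    have hs : A = U * diagonal (RCLike.ofReal ∘ hA.eigenvalues) * star U := hA.spectral_theorem
    rw [hd, Matrix.mul_sub, Matrix.sub_mul, mul_one, ← Matrix.star_eq_conjTranspose,
      ← hs, h1]
  rw [key]
  exact myPosDef_conj (Matrix.posDef_diagonal_iff.mpr (fun i => by linarith [h i])) (myUnit hA)

lemma myPosDefOfUnit {A : Matrix (Fin n) (Fin n) ℝ} (h : A.PosSemidef) (hu : IsUnit A) :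
    A.PosDef := by
  have hmul := h.sqrt_mul_self
  have husqrt : IsUnit h.sqrt := by
    rw [Matrix.isUnit_iff_isUnit_det]
    have : IsUnit (h.sqrt.det * h.sqrt.det) := by
      rw [← Matrix.det_mul, hmul]
      exact (Matrix.isUnit_iff_isUnit_det A).mp hu
    exact isUnit_of_mul_isUnit_left this
  have key : A = h.sqrt * 1 * h.sqrtᴴ := by
    rw [mul_one, h.posSemidef_sqrt.isHermitian, hmul]
  rw [key]
  exact myPosDef_conj Matrix.PosDef.one husqrt

lemma mySqrtPosDef {A : Matrix (Fin n) (Fin n) ℝ} (hA : A.PosDef) :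
    hA.posSemidef.sqrt.PosDef := by
  apply myPosDefOfUnit hA.posSemidef.posSemidef_sqrt
  rw [Matrix.isUnit_iff_isUnit_det]
  have : IsUnit (hA.posSemidef.sqrt.det * hA.posSemidef.sqrt.det) := by
    rw [← Matrix.det_mul, hA.posSemidef.sqrt_mul_self]
    exact (Matrix.isUnit_iff_isUnit_det A).mp hA.isUnit
  exact isUnit_of_mul_isUnit_left this

lemma myKey {P Q : Matrix (Fin n) (Fin n) ℝ} (hP : P.PosDef) (hQ : Q.PosDef) :
    ((hQ.posSemidef.sqrt)⁻¹ * P * (hQ.posSemidef.sqrt)⁻¹).PosDef ∧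
    spectrum ℝ (Q⁻¹ * P) = Set.range
      (isHermitian_conj hQ.posSemidef.posSemidef_sqrt.isHermitian.inv
        hP.isHermitian).eigenvalues ∧
    hQ.posSemidef.sqrt * ((hQ.posSemidef.sqrt)⁻¹ * P * (hQ.posSemidef.sqrt)⁻¹)
      * hQ.posSemidef.sqrt = P ∧
    hQ.posSemidef.sqrt * hQ.posSemidef.sqrt = Q := by
  set R := hQ.posSemidef.sqrt with hRdef
  have hRpd : R.PosDef := mySqrtPosDef hQ
  have hRH : R.IsHermitian := hRpd.isHermitian
  have hRu : IsUnit R := hRpd.isUnit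
  have hRdet : IsUnit R.det := (Matrix.isUnit_iff_isUnit_det R).mp hRu
  have hRinvH : (R⁻¹).IsHermitian := hRH.inv
  have hRinvu : IsUnit (R⁻¹) := hRpd.inv.isUnit
  have hmm : R * R = Q := hQ.posSemidef.sqrt_mul_self
  have hinv : R⁻¹ * R = 1 := Matrix.nonsing_inv_mul R hRdet
  have hinv' : R * R⁻¹ = 1 := Matrix.mul_nonsing_inv R hRdet
  refine ⟨?_, ?_, ?_, hmm⟩
  · have := myPosDef_conj hP hRinvu
    rwa [hRinvH] at this
  · have h1 : Q⁻¹ * P = R⁻¹ * (R⁻¹ * P * R⁻¹) * R := by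
      rw [← hmm, Matrix.mul_inv_rev]
      simp only [Matrix.mul_assoc, hinv, Matrix.mul_one]
    have h2 : spectrum ℝ (R⁻¹ * (R⁻¹ * P * R⁻¹) * R) = spectrum ℝ (R⁻¹ * P * R⁻¹) := by
      have h3 := spectrum.units_conjugate' (R := ℝ) (a := R⁻¹ * P * R⁻¹) (u := hRu.unit)
      rw [Matrix.coe_units_inv, hRu.unit_spec] at h3
      exact h3
    rw [h1, h2]
    exact mySpectrumRange _
  · simp only [Matrix.mul_assoc, hinv, Matrix.mul_one]
    rw [← Matrix.mul_assoc, hinv', Matrix.one_mul]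
    rw [hinv, Matrix.mul_one]

end Helpers

/-- Tight lower bound on the Hilbert VPM distance by the restricted
affine-invariant Riemannian distance: `(1/√n)·d_AIRM(X,Y) ≤ d_H(X,Y)`. -/
theorem airm_restricted_le_hilbert {n : ℕ} (X Y : Matrix (Fin n) (Fin n) ℝ)
    (hX : X ∈ VPM n) (hY : Y ∈ VPM n) :
    (1 / Real.sqrt n) * dAIRM hX.1 hY.1 ≤ dH X Y := by
  rcases Nat.eq_zero_or_pos n with hn | hn
  · subst hn
    have hsub : Subsingleton (Matrix (Fin 0) (Fin 0) ℝ) :=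
      ⟨fun a b => by ext i; exact i.elim0⟩
    have hspec : ∀ A : Matrix (Fin 0) (Fin 0) ℝ, spectrum ℝ A = ∅ := by
      intro A
      ext z
      simp only [Set.mem_empty_iff_false, iff_false]
      intro hz
      exact (spectrum.mem_iff.mp hz) (@isUnit_of_subsingleton _ _ hsub _)
    have hL : dAIRM hX.1 hY.1 = 0 := by
      rw [dAIRM]
      simp
    rw [hL, mul_zero, dH, lmax, lmax, lmin, lmin, hspec, hspec, Real.sSup_empty,
      Real.sInf_empty]
    simp
  · haveI : Nonempty (Fin n) := Fin.pos_iff_nonempty.mp hn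
    obtain ⟨hSpd, hspec, hcong1, hcong2⟩ := myKey hX.1 hY.1
    obtain ⟨hTpd, hspec', hcong1', hcong2'⟩ := myKey hX.2 hY.2
    set μ := (isHermitian_conj hY.1.posSemidef.posSemidef_sqrt.isHermitian.inv
        hX.1.isHermitian).eigenvalues with hμdef
    set ν := (isHermitian_conj hY.2.posSemidef.posSemidef_sqrt.isHermitian.inv
        hX.2.isHermitian).eigenvalues with hνdef
    set M := max (lmax (Y⁻¹ * X)) (lmax ((1 - Y)⁻¹ * (1 - X))) with hMdef
    set m := min (lmin (Y⁻¹ * X)) (lmin ((1 - Y)⁻¹ * (1 - X))) with hmdef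
    have hlminμ : lmin (Y⁻¹ * X) = sInf (Set.range μ) := congrArg sInf hspec
    have hlmaxμ : lmax (Y⁻¹ * X) = sSup (Set.range μ) := congrArg sSup hspec
    have hlminν : lmin ((1 - Y)⁻¹ * (1 - X)) = sInf (Set.range ν) := congrArg sInf hspec'
    have hlmaxν : lmax ((1 - Y)⁻¹ * (1 - X)) = sSup (Set.range ν) := congrArg sSup hspec'
    have hμpos : ∀ i, 0 < μ i := fun i => hSpd.eigenvalues_pos i
    have hνpos : ∀ i, 0 < ν i := fun i => hTpd.eigenvalues_pos i
    have hmleμ : ∀ i, m ≤ μ i := fun i => by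
      rw [hmdef, hlminμ]
      exact (min_le_left _ _).trans (csInf_le (Set.finite_range μ).bddBelow ⟨i, rfl⟩)
    have hmleν : ∀ i, m ≤ ν i := fun i => by
      rw [hmdef, hlminν]
      exact (min_le_right _ _).trans (csInf_le (Set.finite_range ν).bddBelow ⟨i, rfl⟩)
    have hμleM : ∀ i, μ i ≤ M := fun i => by
      rw [hMdef, hlmaxμ]
      exact le_trans (le_csSup (Set.finite_range μ).bddAbove ⟨i, rfl⟩) (le_max_left _ _)
    have hνleM : ∀ i, ν i ≤ M := fun i => by
      rw [hMdef, hlmaxν]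
      exact le_trans (le_csSup (Set.finite_range ν).bddAbove ⟨i, rfl⟩) (le_max_right _ _)
    -- m > 0
    have hmpos : 0 < m := by
      rw [hmdef]
      apply lt_min
      · rw [hlminμ]
        obtain ⟨i, hi⟩ := (Set.range_nonempty μ).csInf_mem (Set.finite_range μ)
        rw [← hi]; exact hμpos i
      · rw [hlminν]
        obtain ⟨i, hi⟩ := (Set.range_nonempty ν).csInf_mem (Set.finite_range ν)
        rw [← hi]; exact hνpos i
    -- contradiction tools
    obtain ⟨i0⟩ := (inferInstance : Nonempty (Fin n))
    have hx0 : (fun _ : Fin n => (1 : ℝ)) ≠ 0 := by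
      intro h
      have := congrFun h i0
      simp at this
    have hR := mySqrtPosDef hY.1
    have hR' := mySqrtPosDef hY.2
    have hnot : ¬ ((X - Y).PosDef ∧ (Y - X).PosDef) := by
      rintro ⟨h1, h2⟩
      have ha := h1.dotProduct_mulVec_pos hx0
      have hb := h2.dotProduct_mulVec_pos hx0
      have he : Y - X = -(X - Y) := by abel
      rw [he, Matrix.neg_mulVec, dotProduct_neg] at hb
      linarith
    -- m ≤ 1
    have hm1 : m ≤ 1 := by
      by_contra hcon
      push_neg at hcon
      apply hnot
      constructor
      · have h1 : ∀ i, 1 < μ i := fun i => lt_of_lt_of_le hcon (hmleμ i)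
        have hPD := mySubOne _ h1
        have key : X - Y = hY.1.posSemidef.sqrt *
            ((hY.1.posSemidef.sqrt)⁻¹ * X * (hY.1.posSemidef.sqrt)⁻¹ - 1) *
            (hY.1.posSemidef.sqrt)ᴴ := by
          rw [hR.isHermitian, Matrix.mul_sub, Matrix.sub_mul, mul_one, hcong1, hcong2]
        rw [key]
        exact myPosDef_conj hPD hR.isUnit
      · have h1 : ∀ i, 1 < ν i := fun i => lt_of_lt_of_le hcon (hmleν i)
        have hPD := mySubOne _ h1
        have key : Y - X = hY.2.posSemidef.sqrt *
            ((hY.2.posSemidef.sqrt)⁻¹ * (1 - X) * (hY.2.posSemidef.sqrt)⁻¹ - 1) *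
            (hY.2.posSemidef.sqrt)ᴴ := by
          rw [hR'.isHermitian, Matrix.mul_sub, Matrix.sub_mul, mul_one, hcong1', hcong2']
          abel
        rw [key]
        exact myPosDef_conj hPD hR'.isUnit
    -- 1 ≤ M
    have hM1 : 1 ≤ M := by
      by_contra hcon
      push_neg at hcon
      apply hnot
      constructor
      · have h1 : ∀ i, ν i < 1 := fun i => lt_of_le_of_lt (hνleM i) hcon
        have hPD := myOneSub _ h1
        have key : X - Y = hY.2.posSemidef.sqrt *
            (1 - ((hY.2.posSemidef.sqrt)⁻¹ * (1 - X) * (hY.2.posSemidef.sqrt)⁻¹)) *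
            (hY.2.posSemidef.sqrt)ᴴ := by
          rw [hR'.isHermitian, Matrix.mul_sub, Matrix.sub_mul, mul_one, hcong1', hcong2']
          abel
        rw [key]
        exact myPosDef_conj hPD hR'.isUnit
      · have h1 : ∀ i, μ i < 1 := fun i => lt_of_le_of_lt (hμleM i) hcon
        have hPD := myOneSub _ h1
        have key : Y - X = hY.1.posSemidef.sqrt *
            (1 - ((hY.1.posSemidef.sqrt)⁻¹ * X * (hY.1.posSemidef.sqrt)⁻¹)) *
            (hY.1.posSemidef.sqrt)ᴴ := by
          rw [hR.isHermitian, Matrix.mul_sub, Matrix.sub_mul, mul_one, hcong1, hcong2]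
        rw [key]
        exact myPosDef_conj hPD hR.isUnit
    -- final arithmetic
    have hMpos : 0 < M := lt_of_lt_of_le zero_lt_one hM1
    set c := Real.log (M / m) with hcdef
    have hceq : c = Real.log M - Real.log m :=
      Real.log_div (ne_of_gt hMpos) (ne_of_gt hmpos)
    have hlogM : 0 ≤ Real.log M := Real.log_nonneg hM1
    have hlogm : Real.log m ≤ 0 := Real.log_nonpos (le_of_lt hmpos) hm1
    have hc0 : 0 ≤ c := by rw [hceq]; linarith
    have hterm : ∀ i, (Real.log (μ i)) ^ 2 ≤ c ^ 2 := by
      intro i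
      have h1 : Real.log (μ i) ≤ Real.log M :=
        (Real.log_le_log_iff (hμpos i) hMpos).mpr (hμleM i)
      have h2 : Real.log m ≤ Real.log (μ i) :=
        (Real.log_le_log_iff hmpos (hμpos i)).mpr (hmleμ i)
      apply sq_le_sq' <;> rw [hceq] <;> linarith
    have hsum : ∑ i, (Real.log (μ i)) ^ 2 ≤ (n : ℝ) * c ^ 2 := by
      calc ∑ i, (Real.log (μ i)) ^ 2
          ≤ Finset.univ.card • (c ^ 2) :=
            Finset.sum_le_card_nsmul _ _ _ (fun i _ => hterm i)
        _ = (n : ℝ) * c ^ 2 := by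
            simp [Finset.card_univ, nsmul_eq_mul]
    have hsq : Real.sqrt (∑ i, (Real.log (μ i)) ^ 2) ≤ Real.sqrt n * c := by
      have h1 := Real.sqrt_le_sqrt hsum
      rwa [Real.sqrt_mul (Nat.cast_nonneg n), Real.sqrt_sq hc0] at h1
    have hdA : dAIRM hX.1 hY.1 = Real.sqrt (∑ i, (Real.log (μ i)) ^ 2) := rfl
    have hdH : dH X Y = c := rfl
    rw [hdA, hdH]
    have hsn : 0 < Real.sqrt n := Real.sqrt_pos.mpr (by exact_mod_cast hn)
    calc (1 / Real.sqrt n) * Real.sqrt (∑ i, (Real.log (μ i)) ^ 2)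
        ≤ (1 / Real.sqrt n) * (Real.sqrt n * c) := by
          apply mul_le_mul_of_nonneg_left hsq
          positivity
      _ = c := by field_simp
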